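/- Let p > 2 and let C_p be a constant such that for every stationary martingale difference sequence (m∘T^i) one has ‖M(n,m,T)‖_{p,∞} ≤ C_p n^{1/p} ‖m‖_p. Let H ⊂ L^p be a subspace with UH ⊂ H, and (P_{T^k}) a semigroup of operators on H satisfying condition (C) with P_T U^{−1} = Id. Then for each f ∈ H and each integer n with 2^{r−1} ≤ n < 2^r, ‖M(n,f,T)‖_{p,∞} ≤ C_p n^{1/p} ( ‖f − U^{−1}P_T f‖_p + K_p Σ_{j=0}^{r−1} 2^{−j/2} ‖Σ_{i=0}^{2^j−1} P_T^i f‖_p ), where K_p = 2^{1/p−1/2} + 2^{1/2}(2 + K(P_T)) and K(P_T) is the power-bound constant of P_T. -/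

import Mathlib

open MeasureTheory ENNReal

/-- Birkhoff sum `S_n(T,f)(x) = Σ_{j=0}^{n-1} f(T^j x)`. -/
noncomputable def birkSum {Ω : Type*} (T : Ω → Ω) (f : Ω → ℝ) (n : ℕ) (x : Ω) : ℝ :=
  ∑ j ∈ Finset.range n, f (T^[j] x)

/-- `M(n,f,T)(x) = max_{0 ≤ i < j ≤ n} |S_j(T,f)(x) - S_i(T,f)(x)| / (j-i)^{1/2-1/p}`. -/
noncomputable def Mmax {Ω : Type*} (p : ℝ) (T : Ω → Ω) (f : Ω → ℝ) (n : ℕ) (x : Ω) : ℝ :=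
  ⨆ (i : ℕ) (j : ℕ) (_ : i < j) (_ : j ≤ n),
    |birkSum T f j x - birkSum T f i x| / ((j : ℝ) - (i : ℝ)) ^ (1 / 2 - 1 / p)

/-- The weak-L^p norm `‖h‖_{p,∞} = sup_{A, μ(A)>0} μ(A)^{-(1-1/p)} E[|h| 1_A]`. -/
noncomputable def weakNorm {Ω : Type*} {_mΩ : MeasurableSpace Ω} (μ : Measure Ω) (p : ℝ)
    (h : Ω → ℝ) : ℝ≥0∞ :=
  ⨆ (A : Set Ω) (_ : MeasurableSet A) (_ : 0 < μ A),
    μ A ^ (1 / p - 1) * ∫⁻ x in A, ‖h x‖₊ ∂μ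

/-- `(h∘T^i)_{i≥0}` is a martingale difference sequence with respect to the filtration
`(T^{-i}M)_{i≥0}` or `(T^{-i-1}M)_{i≥0}`. -/
def IsMDS {Ω : Type*} {m0 : MeasurableSpace Ω} (μ : Measure Ω) (T : Ω → Ω)
    (m : MeasurableSpace Ω) (h : Ω → ℝ) : Prop :=
  (∀ i : ℕ, 1 ≤ i →
      μ[(fun x => h (T^[i] x))|MeasurableSpace.comap (T^[i - 1]) m] =ᵐ[μ] 0) ∨
    (∀ i : ℕ, μ[(fun x => h (T^[i] x))|MeasurableSpace.comap (T^[i]) m] =ᵐ[μ] 0)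


namespace Stmt6Aux

lemma range_pow_ne (k : ℕ) : (Finset.range (2^k)).Nonempty :=
  Finset.nonempty_range_iff.mpr (Nat.two_pow_pos k).ne'

/-- max over aligned dyadic blocks of size `2^l` inside `[0, 2^r)`. -/
noncomputable def Gmax (a : ℕ → ℝ) (r l : ℕ) : ℝ :=
  (Finset.range (2^(r-l))).sup' (range_pow_ne _) (fun s => |a ((s+1)*2^l) - a (s*2^l)|)

lemma le_Gmax (a : ℕ → ℝ) {r l s : ℕ} (hs : s < 2^(r-l)) :
    |a ((s+1)*2^l) - a (s*2^l)| ≤ Gmax a r l :=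
  Finset.le_sup' (fun s => |a ((s+1)*2^l) - a (s*2^l)|) (Finset.mem_range.mpr hs)

lemma Gmax_nonneg (a : ℕ → ℝ) (r l : ℕ) : 0 ≤ Gmax a r l :=
  le_trans (abs_nonneg _) (le_Gmax a (Nat.two_pow_pos _))

lemma Gmax_mono (a : ℕ → ℝ) (r l : ℕ) : Gmax a r l ≤ Gmax a (r+1) l := by
  apply Finset.sup'_le
  intro s hs
  exact Finset.le_sup' (fun s => |a ((s+1)*2^l) - a (s*2^l)|) (Finset.mem_range.mpr
    (lt_of_lt_of_le (Finset.mem_range.mp hs)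
      (Nat.pow_le_pow_right (by norm_num) (Nat.sub_le_sub_right (Nat.le_succ r) l))))

lemma Gmax_shift (a : ℕ → ℝ) {r l : ℕ} (h : l ≤ r) :
    Gmax (fun k => a (k + 2^r)) r l ≤ Gmax a (r+1) l := by
  apply Finset.sup'_le
  intro s hs
  have hs' := Finset.mem_range.mp hs
  have h2 : 2^(r-l) * 2^l = 2^r := by rw [← pow_add]; congr 1; omega
  have e1 : (s+1)*2^l + 2^r = ((s + 2^(r-l))+1)*2^l := by rw [← h2]; ring
  have e2 : s*2^l + 2^r = (s + 2^(r-l))*2^l := by rw [← h2]; ring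
  have hb : s + 2^(r-l) < 2^(r+1-l) := by
    have e3 : 2^(r+1-l) = 2^(r-l) * 2 := by rw [← pow_succ]; congr 1; omega
    omega
  have := le_Gmax a (r := r+1) (l := l) (s := s + 2^(r-l)) hb
  simpa only [e1, e2] using this

/-- upward decomposition: `[i, 2^r)` as aligned blocks, one per level, sizes `≤ 2^r - i`. -/
lemma up_chain : ∀ (r : ℕ) (a : ℕ → ℝ) (i : ℕ), i ≤ 2^r →
    |a (2^r) - a i| ≤ ∑ l ∈ (Finset.range (r+1)).filter (fun l => 2^l ≤ 2^r - i), Gmax a r l := by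
  intro r
  induction r with
  | zero =>
    intro a i hi
    interval_cases i
    · have h0 := le_Gmax a (r := 0) (l := 0) (s := 0) (by norm_num)
      have he : (Finset.range 1).filter (fun l => 2^l ≤ 2^0 - 0) = {0} := by decide
      rw [he, Finset.sum_singleton]
      simpa using h0
    · simp
  | succ r ih =>
    intro a i hi
    have h2 : (2:ℕ)^(r+1) = 2^r + 2^r := by rw [pow_succ]; ring
    rcases Nat.eq_zero_or_pos i with hi0 | hipos
    · -- single block at level r+1
      subst hi0
      have hb := le_Gmax a (r := r+1) (l := r+1) (s := 0) (by simp)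
      have hmem : (r+1) ∈ (Finset.range (r+1+1)).filter (fun l => 2^l ≤ 2^(r+1) - 0) := by
        simp
      refine le_trans ?_ (Finset.single_le_sum (f := fun l => Gmax a (r+1) l)
        (fun l _ => Gmax_nonneg a _ _) hmem)
      simpa using hb
    · by_cases hcase : 2^r ≤ i
      · -- shift into upper half
        have h1 := ih (fun k => a (k + 2^r)) (i - 2^r) (by omega)
        have e1 : i - 2^r + 2^r = i := by omega
        have e2 : (2:ℕ)^r + 2^r = 2^(r+1) := by omega
        simp only [e1, e2] at h1
        refine le_trans h1 ?_
        have hsub : (Finset.range (r+1)).filter (fun l => 2^l ≤ 2^r - (i - 2^r)) ⊆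
            (Finset.range (r+1+1)).filter (fun l => 2^l ≤ 2^(r+1) - i) := by
          intro l hl
          simp only [Finset.mem_filter, Finset.mem_range] at hl ⊢
          exact ⟨by omega, by omega⟩
        calc ∑ l ∈ (Finset.range (r+1)).filter (fun l => 2^l ≤ 2^r - (i - 2^r)),
              Gmax (fun k => a (k + 2^r)) r l
            ≤ ∑ l ∈ (Finset.range (r+1)).filter (fun l => 2^l ≤ 2^r - (i - 2^r)), Gmax a (r+1) l :=
              Finset.sum_le_sum (fun l hl => Gmax_shift a (by
                have := Finset.mem_range.mp (Finset.mem_filter.mp hl).1; omega))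
          _ ≤ _ := Finset.sum_le_sum_of_subset_of_nonneg hsub (fun l _ _ => Gmax_nonneg a _ _)
      · -- i < 2^r : block [2^r, 2^(r+1)) plus recursion on [i, 2^r)
        push_neg at hcase
        have key1 : |a (2^(r+1)) - a (2^r)| ≤ Gmax a (r+1) r := by
          have hb := le_Gmax a (r := r+1) (l := r) (s := 1) (by
            have hrr : r + 1 - r = 1 := by omega
            rw [hrr]; norm_num)
          have e1 : (1+1)*2^r = 2^(r+1) := by omega
          have e2 : 1*2^r = 2^r := by omega
          rwa [e1, e2] at hb
        have key2 := ih a i (by omega)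
        have hrF : r ∈ (Finset.range (r+1+1)).filter (fun l => 2^l ≤ 2^(r+1) - i) := by
          simp only [Finset.mem_filter, Finset.mem_range]
          exact ⟨by omega, by omega⟩
        have hsub : (Finset.range (r+1)).filter (fun l => 2^l ≤ 2^r - i) ⊆
            ((Finset.range (r+1+1)).filter (fun l => 2^l ≤ 2^(r+1) - i)).erase r := by
          intro l hl
          simp only [Finset.mem_filter, Finset.mem_range] at hl
          have hlr : l < r := by
            have h2l : 2^l < 2^r := by omega
            exact (Nat.pow_lt_pow_iff_right (by norm_num)).mp h2l
          simp only [Finset.mem_erase, Finset.mem_filter, Finset.mem_range]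
          exact ⟨by omega, by omega, by omega⟩
        calc |a (2^(r+1)) - a i| ≤ |a (2^(r+1)) - a (2^r)| + |a (2^r) - a i| := abs_sub_le _ _ _
          _ ≤ Gmax a (r+1) r +
              ∑ l ∈ ((Finset.range (r+1+1)).filter (fun l => 2^l ≤ 2^(r+1) - i)).erase r,
                Gmax a (r+1) l := by
              refine add_le_add key1 (le_trans key2 ?_)
              calc ∑ l ∈ (Finset.range (r+1)).filter (fun l => 2^l ≤ 2^r - i), Gmax a r l
                  ≤ ∑ l ∈ (Finset.range (r+1)).filter (fun l => 2^l ≤ 2^r - i), Gmax a (r+1) l :=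
                    Finset.sum_le_sum (fun l _ => Gmax_mono a _ _)
                _ ≤ _ := Finset.sum_le_sum_of_subset_of_nonneg hsub (fun l _ _ => Gmax_nonneg a _ _)
          _ = ∑ l ∈ (Finset.range (r+1+1)).filter (fun l => 2^l ≤ 2^(r+1) - i), Gmax a (r+1) l := by
              rw [add_comm]; exact Finset.sum_erase_add _ _ hrF

/-- downward decomposition: `[0, j)` as aligned blocks, one per level, sizes `≤ j`. -/
lemma down_chain : ∀ (r : ℕ) (a : ℕ → ℝ) (j : ℕ), j ≤ 2^r →
    |a j - a 0| ≤ ∑ l ∈ (Finset.range (r+1)).filter (fun l => 2^l ≤ j), Gmax a r l := by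
  intro r
  induction r with
  | zero =>
    intro a j hj
    interval_cases j
    · simp
    · have h0 := le_Gmax a (r := 0) (l := 0) (s := 0) (by norm_num)
      have he : (Finset.range 1).filter (fun l => 2^l ≤ 1) = {0} := by decide
      rw [he, Finset.sum_singleton]
      simpa using h0
  | succ r ih =>
    intro a j hj
    have h2 : (2:ℕ)^(r+1) = 2^r + 2^r := by rw [pow_succ]; ring
    rcases eq_or_lt_of_le hj with hj2 | hj2
    · -- j = 2^(r+1) : single block at level r+1
      have hb := le_Gmax a (r := r+1) (l := r+1) (s := 0) (by simp)
      have hmem : (r+1) ∈ (Finset.range (r+1+1)).filter (fun l => 2^l ≤ j) := by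
        simp only [Finset.mem_filter, Finset.mem_range]
        exact ⟨by omega, by omega⟩
      refine le_trans ?_ (Finset.single_le_sum (f := fun l => Gmax a (r+1) l)
        (fun l _ => Gmax_nonneg a _ _) hmem)
      rw [hj2]
      simpa using hb
    · by_cases hcase : j ≤ 2^r
      · refine le_trans (ih a j hcase) ?_
        have hsub : (Finset.range (r+1)).filter (fun l => 2^l ≤ j) ⊆
            (Finset.range (r+1+1)).filter (fun l => 2^l ≤ j) := by
          refine Finset.filter_subset_filter _ (Finset.range_subset_range.mpr (by omega))
        calc ∑ l ∈ (Finset.range (r+1)).filter (fun l => 2^l ≤ j), Gmax a r l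
            ≤ ∑ l ∈ (Finset.range (r+1)).filter (fun l => 2^l ≤ j), Gmax a (r+1) l :=
              Finset.sum_le_sum (fun l _ => Gmax_mono a _ _)
          _ ≤ _ := Finset.sum_le_sum_of_subset_of_nonneg hsub (fun l _ _ => Gmax_nonneg a _ _)
      · push_neg at hcase
        have key1 : |a (2^r) - a 0| ≤ Gmax a (r+1) r := by
          have hb := le_Gmax a (r := r+1) (l := r) (s := 0) (by
            have hrr : r + 1 - r = 1 := by omega
            rw [hrr]; norm_num)
          simpa using hb
        have key2 : |a j - a (2^r)| ≤
            ∑ l ∈ (Finset.range (r+1)).filter (fun l => 2^l ≤ j - 2^r),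
              Gmax (fun k => a (k + 2^r)) r l := by
          have h1 := ih (fun k => a (k + 2^r)) (j - 2^r) (by omega)
          have e1 : j - 2^r + 2^r = j := by omega
          simp only [Nat.zero_add, e1] at h1
          simpa using h1
        have hrF : r ∈ (Finset.range (r+1+1)).filter (fun l => 2^l ≤ j) := by
          simp only [Finset.mem_filter, Finset.mem_range]
          exact ⟨by omega, by omega⟩
        have hsub : (Finset.range (r+1)).filter (fun l => 2^l ≤ j - 2^r) ⊆
            ((Finset.range (r+1+1)).filter (fun l => 2^l ≤ j)).erase r := by
          intro l hl
          simp only [Finset.mem_filter, Finset.mem_range] at hl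
          have hlr : l < r := by
            have h2l : 2^l < 2^r := by omega
            exact (Nat.pow_lt_pow_iff_right (by norm_num)).mp h2l
          simp only [Finset.mem_erase, Finset.mem_filter, Finset.mem_range]
          exact ⟨by omega, by omega, by omega⟩
        calc |a j - a 0| ≤ |a j - a (2^r)| + |a (2^r) - a 0| := abs_sub_le _ _ _
          _ ≤ (∑ l ∈ ((Finset.range (r+1+1)).filter (fun l => 2^l ≤ j)).erase r,
                Gmax a (r+1) l) + Gmax a (r+1) r := by
              refine add_le_add (le_trans key2 ?_) key1
              calc ∑ l ∈ (Finset.range (r+1)).filter (fun l => 2^l ≤ j - 2^r),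
                    Gmax (fun k => a (k + 2^r)) r l
                  ≤ ∑ l ∈ (Finset.range (r+1)).filter (fun l => 2^l ≤ j - 2^r), Gmax a (r+1) l :=
                    Finset.sum_le_sum (fun l hl => Gmax_shift a (by
                      have := Finset.mem_range.mp (Finset.mem_filter.mp hl).1; omega))
                _ ≤ _ := Finset.sum_le_sum_of_subset_of_nonneg hsub (fun l _ _ => Gmax_nonneg a _ _)
          _ = ∑ l ∈ (Finset.range (r+1+1)).filter (fun l => 2^l ≤ j), Gmax a (r+1) l :=
              Finset.sum_erase_add _ _ hrF

/-- two-sided chaining: at most two aligned blocks per level, all of size `≤ j - i`. -/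
lemma main_chain : ∀ (r : ℕ) (a : ℕ → ℝ) (i j : ℕ), i ≤ j → j ≤ 2^r →
    |a j - a i| ≤ ∑ l ∈ (Finset.range (r+1)).filter (fun l => 2^l ≤ j - i), 2 * Gmax a r l := by
  intro r
  induction r with
  | zero =>
    intro a i j hij hj
    interval_cases j <;> interval_cases i
    · simp
    · have h0 := le_Gmax a (r := 0) (l := 0) (s := 0) (by norm_num)
      have he : (Finset.range 1).filter (fun l => 2^l ≤ 1 - 0) = {0} := by decide
      rw [he, Finset.sum_singleton]
      have := Gmax_nonneg a 0 0
      norm_num at h0 ⊢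
      nlinarith [h0, this]
    · simp
  | succ r ih =>
    intro a i j hij hj
    have h2 : (2:ℕ)^(r+1) = 2^r + 2^r := by rw [pow_succ]; ring
    by_cases hcase1 : j ≤ 2^r
    · refine le_trans (ih a i j hij hcase1) ?_
      have hsub : (Finset.range (r+1)).filter (fun l => 2^l ≤ j - i) ⊆
          (Finset.range (r+1+1)).filter (fun l => 2^l ≤ j - i) :=
        Finset.filter_subset_filter _ (Finset.range_subset_range.mpr (by omega))
      calc ∑ l ∈ (Finset.range (r+1)).filter (fun l => 2^l ≤ j - i), 2 * Gmax a r l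
          ≤ ∑ l ∈ (Finset.range (r+1)).filter (fun l => 2^l ≤ j - i), 2 * Gmax a (r+1) l :=
            Finset.sum_le_sum (fun l _ => by nlinarith [Gmax_mono a r l])
        _ ≤ _ := Finset.sum_le_sum_of_subset_of_nonneg hsub
            (fun l _ _ => by nlinarith [Gmax_nonneg a (r+1) l])
    · by_cases hcase2 : 2^r ≤ i
      · -- both in upper half: shift
        have h1 := ih (fun k => a (k + 2^r)) (i - 2^r) (j - 2^r) (by omega) (by omega)
        have e1 : j - 2^r + 2^r = j := by omega
        have e2 : i - 2^r + 2^r = i := by omega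
        have e3 : j - 2^r - (i - 2^r) = j - i := by omega
        simp only [e1, e2, e3] at h1
        refine le_trans h1 ?_
        have hsub : (Finset.range (r+1)).filter (fun l => 2^l ≤ j - i) ⊆
            (Finset.range (r+1+1)).filter (fun l => 2^l ≤ j - i) :=
          Finset.filter_subset_filter _ (Finset.range_subset_range.mpr (by omega))
        calc ∑ l ∈ (Finset.range (r+1)).filter (fun l => 2^l ≤ j - i),
              2 * Gmax (fun k => a (k + 2^r)) r l
            ≤ ∑ l ∈ (Finset.range (r+1)).filter (fun l => 2^l ≤ j - i), 2 * Gmax a (r+1) l :=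
              Finset.sum_le_sum (fun l hl => by
                have hlr : l ≤ r := by
                  have := Finset.mem_range.mp (Finset.mem_filter.mp hl).1; omega
                nlinarith [Gmax_shift a hlr, Gmax_nonneg (fun k => a (k + 2^r)) r l])
          _ ≤ _ := Finset.sum_le_sum_of_subset_of_nonneg hsub
              (fun l _ _ => by nlinarith [Gmax_nonneg a (r+1) l])
      · -- straddle: i < 2^r < j
        push_neg at hcase1 hcase2
        have hup := up_chain r a i (by omega)
        have hdown : |a j - a (2^r)| ≤
            ∑ l ∈ (Finset.range (r+1)).filter (fun l => 2^l ≤ j - 2^r),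
              Gmax (fun k => a (k + 2^r)) r l := by
          have h1 := down_chain r (fun k => a (k + 2^r)) (j - 2^r) (by omega)
          have e1 : j - 2^r + 2^r = j := by omega
          simp only [Nat.zero_add, e1] at h1
          simpa using h1
        set F := (Finset.range (r+1+1)).filter (fun l => 2^l ≤ j - i) with hF
        have hupF : ∑ l ∈ (Finset.range (r+1)).filter (fun l => 2^l ≤ 2^r - i), Gmax a r l ≤
            ∑ l ∈ F, Gmax a (r+1) l := by
          have hsub : (Finset.range (r+1)).filter (fun l => 2^l ≤ 2^r - i) ⊆ F := by
            intro l hl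
            simp only [Finset.mem_filter, Finset.mem_range] at hl
            simp only [hF, Finset.mem_filter, Finset.mem_range]
            exact ⟨by omega, by omega⟩
          calc ∑ l ∈ (Finset.range (r+1)).filter (fun l => 2^l ≤ 2^r - i), Gmax a r l
              ≤ ∑ l ∈ (Finset.range (r+1)).filter (fun l => 2^l ≤ 2^r - i), Gmax a (r+1) l :=
                Finset.sum_le_sum (fun l _ => Gmax_mono a _ _)
            _ ≤ _ := Finset.sum_le_sum_of_subset_of_nonneg hsub (fun l _ _ => Gmax_nonneg a _ _)
        have hdownF : ∑ l ∈ (Finset.range (r+1)).filter (fun l => 2^l ≤ j - 2^r),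
            Gmax (fun k => a (k + 2^r)) r l ≤ ∑ l ∈ F, Gmax a (r+1) l := by
          have hsub : (Finset.range (r+1)).filter (fun l => 2^l ≤ j - 2^r) ⊆ F := by
            intro l hl
            simp only [Finset.mem_filter, Finset.mem_range] at hl
            simp only [hF, Finset.mem_filter, Finset.mem_range]
            exact ⟨by omega, by omega⟩
          calc ∑ l ∈ (Finset.range (r+1)).filter (fun l => 2^l ≤ j - 2^r),
                Gmax (fun k => a (k + 2^r)) r l
              ≤ ∑ l ∈ (Finset.range (r+1)).filter (fun l => 2^l ≤ j - 2^r), Gmax a (r+1) l :=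
                Finset.sum_le_sum (fun l hl => Gmax_shift a (by
                  have := Finset.mem_range.mp (Finset.mem_filter.mp hl).1; omega))
            _ ≤ _ := Finset.sum_le_sum_of_subset_of_nonneg hsub (fun l _ _ => Gmax_nonneg a _ _)
        calc |a j - a i| ≤ |a j - a (2^r)| + |a (2^r) - a i| := abs_sub_le _ _ _
          _ ≤ (∑ l ∈ F, Gmax a (r+1) l) + ∑ l ∈ F, Gmax a (r+1) l :=
              add_le_add (le_trans hdown hdownF) (le_trans hup hupF)
          _ = ∑ l ∈ F, 2 * Gmax a (r+1) l := by rw [← Finset.sum_add_distrib]; congr 1; funext l; ring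

lemma birkSum_succ {Ω : Type*} (T : Ω → Ω) (f : Ω → ℝ) (n : ℕ) (x : Ω) :
    birkSum T f (n+1) x = birkSum T f n x + f (T^[n] x) := by
  unfold birkSum; rw [Finset.sum_range_succ]

lemma birkSum_add' {Ω : Type*} (T : Ω → Ω) (f : Ω → ℝ) (m k : ℕ) (x : Ω) :
    birkSum T f (m + k) x = birkSum T f m x + birkSum T f k (T^[m] x) := by
  induction k with
  | zero => simp [birkSum]
  | succ k ih =>
    have h1 : m + (k+1) = (m+k) + 1 := by omega
    rw [h1, birkSum_succ, ih, birkSum_succ]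
    have h2 : T^[m+k] x = T^[k] (T^[m] x) := by rw [add_comm m k, Function.iterate_add_apply]
    rw [h2]; ring

end Stmt6Aux

set_option maxHeartbeats 1000000 in
theorem stmt6 {Ω : Type*} [m0 : MeasurableSpace Ω] (μ : Measure Ω) [IsProbabilityMeasure μ]
    (T Tinv : Ω → Ω) (hT : MeasurePreserving T μ μ) (hTbij : Function.Bijective T)
    (hTinv : Function.LeftInverse Tinv T) (hTinv' : Function.RightInverse Tinv T)
    (m : MeasurableSpace Ω) (hm : m ≤ m0) (hTm : m ≤ MeasurableSpace.comap T m)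
    (p : ℝ) (hp : 2 < p)
    -- `H` is a subspace of `L^p` with `UH ⊆ H`
    (H : Set (Ω → ℝ)) (hHLp : ∀ f ∈ H, MemLp f (ENNReal.ofReal p) μ)
    (hUH : ∀ f ∈ H, (fun x => f (T x)) ∈ H)
    -- a semigroup of operators of `H`, given by the iterates of `P`
    (P : (Ω → ℝ) → (Ω → ℝ)) (hPH : ∀ f ∈ H, P f ∈ H)
    -- condition (C): power boundedness with constant `K`
    (K : ℝ) (hK : 0 ≤ K)
    (hPbdd : ∀ f ∈ H, ∀ k : ℕ,
      eLpNorm (P^[k] f) (ENNReal.ofReal p) μ ≤ ENNReal.ofReal K * eLpNorm f (ENNReal.ofReal p) μ)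
    -- condition (C): kernel elements of `P` are martingale differences
    (hPmds : ∀ h ∈ H, P h = 0 → IsMDS μ T m h)
    -- condition (C): `P_T U^{-1} = Id` on `H`
    (hPU : ∀ f ∈ H, P (fun x => f (Tinv x)) = f)
    -- `C_p` satisfies the martingale maximal inequality
    (Cp : ℝ) (hCp0 : 1 ≤ Cp)
    (hCp : ∀ g : Ω → ℝ, MemLp g (ENNReal.ofReal p) μ → IsMDS μ T m g → ∀ n : ℕ, 1 ≤ n →
      weakNorm μ p (Mmax p T g n)
        ≤ ENNReal.ofReal Cp * (n : ℝ≥0∞) ^ (1 / p) * eLpNorm g (ENNReal.ofReal p) μ) :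
    ∀ f ∈ H, ∀ r n : ℕ, 1 ≤ r → 2 ^ (r - 1) ≤ n → n < 2 ^ r →
      weakNorm μ p (Mmax p T f n)
        ≤ ENNReal.ofReal Cp * (n : ℝ≥0∞) ^ (1 / p) *
          (eLpNorm (fun x => f x - (P f) (Tinv x)) (ENNReal.ofReal p) μ
            + ENNReal.ofReal ((2 : ℝ) ^ (1 / p - 1 / 2) + 2 ^ ((1 : ℝ) / 2) * (2 + K)) *
              ∑ j ∈ Finset.range r, ENNReal.ofReal ((2 : ℝ) ^ (-(j : ℝ) / 2)) *
                eLpNorm (fun x => ∑ i ∈ Finset.range (2 ^ j), (P^[i] f) x)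
                  (ENNReal.ofReal p) μ) := by
  intro f hf r n hr hn1 hn2
  clear hCp hPmds hTm hm
  clear m
  have hp0 : (0:ℝ) < p := by linarith
  have hp1 : (1:ℝ) < p := by linarith
  have h12 : 1/p < 1/2 := one_div_lt_one_div_of_lt (by norm_num) hp
  have hθ : (0:ℝ) < 1/2 - 1/p := by linarith
  -- `P` acts as composition with `T` on `H`
  have hPg : ∀ g ∈ H, P g = fun x => g (T x) := by
    intro g hg
    have h2 := hPU _ (hUH g hg)
    have h3 : (fun x => (fun y => g (T y)) (Tinv x)) = g := by
      funext x; simp [hTinv' x]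
    rw [h3] at h2; exact h2
  have hmemIter : ∀ i : ℕ, (fun x => f (T^[i] x)) ∈ H := by
    intro i; induction i with
    | zero => simpa using hf
    | succ i ih =>
      have h1 := hUH _ ih
      have h2 : (fun x => f (T^[i] (T x))) = fun x => f (T^[i+1] x) := by
        funext x; rw [Function.iterate_succ_apply]
      rw [h2] at h1; exact h1
  have hPiter : ∀ i : ℕ, P^[i] f = fun x => f (T^[i] x) := by
    intro i; induction i with
    | zero => funext x; simp
    | succ i ih =>
      rw [Function.iterate_succ_apply', ih, hPg _ (hmemIter i)]
      funext x; rw [← Function.iterate_succ_apply]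
  have hSum : ∀ j : ℕ, (fun x => ∑ i ∈ Finset.range (2^j), (P^[i] f) x) = birkSum T f (2^j) := by
    intro j; funext x
    unfold birkSum
    exact Finset.sum_congr rfl fun i _ => by rw [hPiter i]
  -- measurability
  have hfae : AEMeasurable f μ := (hHLp f hf).aestronglyMeasurable.aemeasurable
  have haeB : ∀ k : ℕ, AEMeasurable (birkSum T f k) μ := by
    intro k
    unfold birkSum
    exact Finset.aemeasurable_fun_sum _ fun i _ =>
      hfae.comp_quasiMeasurePreserving (hT.iterate i).quasiMeasurePreserving
  have haeG : ∀ l : ℕ, AEMeasurable (fun x => Stmt6Aux.Gmax (fun k => birkSum T f k x) r l) μ := by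
    intro l
    have main : ∀ (s : Finset ℕ) (hs : s.Nonempty), AEMeasurable
        (fun x => s.sup' hs (fun i => |birkSum T f ((i+1)*2^l) x - birkSum T f (i*2^l) x|)) μ := by
      intro s hs
      induction hs using Finset.Nonempty.cons_induction with
      | singleton a =>
        simp only [Finset.sup'_singleton]
        exact measurable_abs.comp_aemeasurable ((haeB _).sub (haeB _))
      | cons a s ha hs ih =>
        have hmax := AEMeasurable.max
          (measurable_abs.comp_aemeasurable ((haeB ((a+1)*2^l)).sub (haeB (a*2^l)))) ih
        exact hmax.congr (Filter.EventuallyEq.of_eq (funext fun x =>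
          (Finset.sup'_cons hs (fun i => |birkSum T f ((i+1)*2^l) x - birkSum T f (i*2^l) x|)).symm))
    exact main _ _
  -- nonnegativity of Mmax
  have hM0 : ∀ x, 0 ≤ Mmax p T f n x := by
    intro x
    unfold Mmax
    refine Real.iSup_nonneg fun i => Real.iSup_nonneg fun j => Real.iSup_nonneg fun hij =>
      Real.iSup_nonneg fun _ => div_nonneg (abs_nonneg _) (Real.rpow_nonneg ?_ _)
    have : (i:ℝ) < (j:ℝ) := by exact_mod_cast hij
    linarith
  -- the dominating function
  set Φ : Ω → ℝ := fun x => ∑ l ∈ Finset.range r,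
    2 * Stmt6Aux.Gmax (fun k => birkSum T f k x) r l / ((2:ℝ)^l) ^ (1/2 - 1/p) with hΦdef
  have hΦterm_nonneg : ∀ x, ∀ l : ℕ,
      0 ≤ 2 * Stmt6Aux.Gmax (fun k => birkSum T f k x) r l / ((2:ℝ)^l) ^ (1/2 - 1/p) :=
    fun x l => div_nonneg (by nlinarith [Stmt6Aux.Gmax_nonneg (fun k => birkSum T f k x) r l])
      (Real.rpow_nonneg (by positivity) _)
  have hΦ0 : ∀ x, 0 ≤ Φ x := fun x => Finset.sum_nonneg fun l _ => hΦterm_nonneg x l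
  -- pointwise chaining bound
  have hMle : ∀ x, Mmax p T f n x ≤ Φ x := by
    intro x
    unfold Mmax
    refine Real.iSup_le (fun i => Real.iSup_le (fun j => Real.iSup_le (fun hij =>
      Real.iSup_le (fun hjn => ?_) (hΦ0 x)) (hΦ0 x)) (hΦ0 x)) (hΦ0 x)
    have hjr : j ≤ 2^r := le_trans hjn (le_of_lt hn2)
    have hmain := Stmt6Aux.main_chain r (fun k => birkSum T f k x) i j hij.le hjr
    have hd1 : (1:ℝ) ≤ (j:ℝ) - i := by
      have : (i:ℝ) + 1 ≤ (j:ℝ) := by exact_mod_cast hij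
      linarith
    have hdθ : (0:ℝ) < ((j:ℝ) - i) ^ (1/2 - 1/p) := Real.rpow_pos_of_pos (by linarith) _
    calc |birkSum T f j x - birkSum T f i x| / ((j:ℝ) - i) ^ (1/2 - 1/p)
        ≤ (∑ l ∈ (Finset.range (r+1)).filter (fun l => 2^l ≤ j - i),
            2 * Stmt6Aux.Gmax (fun k => birkSum T f k x) r l) / ((j:ℝ) - i) ^ (1/2 - 1/p) := by
          gcongr
      _ = ∑ l ∈ (Finset.range (r+1)).filter (fun l => 2^l ≤ j - i),
            2 * Stmt6Aux.Gmax (fun k => birkSum T f k x) r l / ((j:ℝ) - i) ^ (1/2 - 1/p) :=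
          Finset.sum_div _ _ _
      _ ≤ ∑ l ∈ (Finset.range (r+1)).filter (fun l => 2^l ≤ j - i),
            2 * Stmt6Aux.Gmax (fun k => birkSum T f k x) r l / ((2:ℝ)^l) ^ (1/2 - 1/p) := by
          refine Finset.sum_le_sum fun l hl => ?_
          have h2l : ((2:ℝ)^l) ≤ (j:ℝ) - i := by
            have hn : (2:ℕ)^l ≤ j - i := (Finset.mem_filter.mp hl).2
            have : ((2^l : ℕ) : ℝ) ≤ ((j - i : ℕ) : ℝ) := by exact_mod_cast hn
            rw [Nat.cast_sub hij.le] at this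
            push_cast at this ⊢
            linarith
          have hrp := Real.rpow_le_rpow (by positivity : (0:ℝ) ≤ (2:ℝ)^l) h2l hθ.le
          gcongr
          nlinarith [Stmt6Aux.Gmax_nonneg (fun k => birkSum T f k x) r l]
      _ ≤ Φ x := by
          rw [hΦdef]
          refine Finset.sum_le_sum_of_subset_of_nonneg ?_ fun l _ _ => hΦterm_nonneg x l
          intro l hl
          have h1 := (Finset.mem_filter.mp hl).2
          have h2 : (2:ℕ)^l < 2^r := by omega
          exact Finset.mem_range.mpr ((Nat.pow_lt_pow_iff_right (by norm_num)).mp h2)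
  -- L^p data
  have hPn0 : (ENNReal.ofReal p) ≠ 0 := by
    simp only [ne_eq, ENNReal.ofReal_eq_zero, not_le]; linarith
  have hPnT : (ENNReal.ofReal p) ≠ ⊤ := ENNReal.ofReal_ne_top
  set Ip : ℕ → ℝ≥0∞ := fun l => ∫⁻ y, (ENNReal.ofReal |birkSum T f (2^l) y|)^p ∂μ with hIpdef
  have hNpIp : ∀ l : ℕ, eLpNorm (birkSum T f (2^l)) (ENNReal.ofReal p) μ = (Ip l)^(1/p) := by
    intro l
    rw [eLpNorm_eq_lintegral_rpow_enorm_toReal hPn0 hPnT, ENNReal.toReal_ofReal hp0.le, hIpdef]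
    congr 1
    refine lintegral_congr fun x => ?_
    rw [← ofReal_norm, Real.norm_eq_abs]
  -- per-level block sum estimate
  have hsum : ∀ l : ℕ,
      ∫⁻ x, (ENNReal.ofReal (Stmt6Aux.Gmax (fun k => birkSum T f k x) r l))^p ∂μ
        ≤ ((2^(r-l):ℕ) : ℝ≥0∞) * Ip l := by
    intro l
    have hptw : ∀ x, (ENNReal.ofReal (Stmt6Aux.Gmax (fun k => birkSum T f k x) r l))^p
        ≤ ∑ s ∈ Finset.range (2^(r-l)),
            (ENNReal.ofReal |birkSum T f (2^l) (T^[s*2^l] x)|)^p := by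
      intro x
      obtain ⟨s, hs, hEq⟩ := Finset.exists_mem_eq_sup' (Stmt6Aux.range_pow_ne (r-l))
        (fun s => |birkSum T f ((s+1)*2^l) x - birkSum T f (s*2^l) x|)
      have hGx : Stmt6Aux.Gmax (fun k => birkSum T f k x) r l
          = |birkSum T f ((s+1)*2^l) x - birkSum T f (s*2^l) x| := hEq
      have hblock : birkSum T f ((s+1)*2^l) x - birkSum T f (s*2^l) x
          = birkSum T f (2^l) (T^[s*2^l] x) := by
        have h1 := Stmt6Aux.birkSum_add' T f (s*2^l) (2^l) x
        have h2 : (s+1)*2^l = s*2^l + 2^l := by ring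
        rw [h2, h1]; ring
      rw [hGx, hblock]
      exact Finset.single_le_sum
        (f := fun s => (ENNReal.ofReal |birkSum T f (2^l) (T^[s*2^l] x)|)^p)
        (fun _ _ => zero_le) hs
    have haeBlockP : ∀ s : ℕ,
        AEMeasurable (fun x => (ENNReal.ofReal |birkSum T f (2^l) (T^[s*2^l] x)|)^p) μ := by
      intro s
      exact ((measurable_abs.comp_aemeasurable ((haeB (2^l)).comp_quasiMeasurePreserving
        (hT.iterate (s*2^l)).quasiMeasurePreserving)).ennreal_ofReal).pow_const p
    have hIs : ∀ s : ℕ,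
        ∫⁻ x, (ENNReal.ofReal |birkSum T f (2^l) (T^[s*2^l] x)|)^p ∂μ = Ip l := by
      intro s
      have hmp := hT.iterate (s*2^l)
      have hgae : AEMeasurable (fun y => (ENNReal.ofReal |birkSum T f (2^l) y|)^p)
          (Measure.map (T^[s*2^l]) μ) := by
        rw [hmp.map_eq]
        exact ((measurable_abs.comp_aemeasurable (haeB (2^l))).ennreal_ofReal).pow_const p
      calc ∫⁻ x, (ENNReal.ofReal |birkSum T f (2^l) (T^[s*2^l] x)|)^p ∂μ
          = ∫⁻ y, (ENNReal.ofReal |birkSum T f (2^l) y|)^p ∂(Measure.map (T^[s*2^l]) μ) :=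
            (lintegral_map' hgae hmp.aemeasurable).symm
        _ = Ip l := by rw [hmp.map_eq]
    calc ∫⁻ x, (ENNReal.ofReal (Stmt6Aux.Gmax (fun k => birkSum T f k x) r l))^p ∂μ
        ≤ ∫⁻ x, ∑ s ∈ Finset.range (2^(r-l)),
            (ENNReal.ofReal |birkSum T f (2^l) (T^[s*2^l] x)|)^p ∂μ := lintegral_mono hptw
      _ = ∑ s ∈ Finset.range (2^(r-l)),
            ∫⁻ x, (ENNReal.ofReal |birkSum T f (2^l) (T^[s*2^l] x)|)^p ∂μ :=
          lintegral_finset_sum' _ (fun s _ => haeBlockP s)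
      _ = ∑ s ∈ Finset.range (2^(r-l)), Ip l := Finset.sum_congr rfl fun s _ => hIs s
      _ = ((2^(r-l):ℕ) : ℝ≥0∞) * Ip l := by
          rw [Finset.sum_const, Finset.card_range, nsmul_eq_mul]
  -- per-level weak-norm estimate
  have key : ∀ l : ℕ, ∀ A : Set Ω, MeasurableSet A → 0 < μ A →
      μ A ^ (1/p - 1) *
        ∫⁻ x in A, ENNReal.ofReal (Stmt6Aux.Gmax (fun k => birkSum T f k x) r l) ∂μ
      ≤ ((2^(r-l):ℕ) : ℝ≥0∞) ^ (1/p) * eLpNorm (birkSum T f (2^l)) (ENNReal.ofReal p) μ := by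
    intro l A hA hApos
    have hGae : AEMeasurable
        (fun x => ENNReal.ofReal (Stmt6Aux.Gmax (fun k => birkSum T f k x) r l))
        (μ.restrict A) := ((haeG l).ennreal_ofReal).restrict
    have hq := Real.HolderConjugate.conjExponent hp1
    have holder := ENNReal.lintegral_mul_le_Lp_mul_Lq (μ.restrict A) hq hGae
      (aemeasurable_const (b := (1:ℝ≥0∞)))
    simp only [Pi.mul_apply, mul_one, ENNReal.one_rpow, lintegral_one,
      Measure.restrict_apply_univ] at holder
    have hq1 : 1/p.conjExponent = 1 - 1/p := by
      rw [one_div, ← hq.one_sub_inv, one_div]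
    rw [hq1] at holder
    calc μ A ^ (1/p - 1) *
          ∫⁻ x in A, ENNReal.ofReal (Stmt6Aux.Gmax (fun k => birkSum T f k x) r l) ∂μ
        ≤ μ A ^ (1/p - 1) *
          ((∫⁻ x in A, (ENNReal.ofReal (Stmt6Aux.Gmax (fun k => birkSum T f k x) r l))^p ∂μ)^(1/p)
            * μ A ^ (1 - 1/p)) := mul_le_mul_right holder _
      _ = (μ A ^ (1/p - 1) * μ A ^ (1 - 1/p)) *
          (∫⁻ x in A, (ENNReal.ofReal (Stmt6Aux.Gmax (fun k => birkSum T f k x) r l))^p ∂μ)^(1/p) := by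
          ring
      _ = (∫⁻ x in A, (ENNReal.ofReal (Stmt6Aux.Gmax (fun k => birkSum T f k x) r l))^p ∂μ)^(1/p) := by
          rw [← ENNReal.rpow_add _ _ hApos.ne' (measure_ne_top μ A)]
          rw [show (1/p - 1) + (1 - 1/p) = 0 by ring, ENNReal.rpow_zero, one_mul]
      _ ≤ (∫⁻ x, (ENNReal.ofReal (Stmt6Aux.Gmax (fun k => birkSum T f k x) r l))^p ∂μ)^(1/p) :=
          ENNReal.rpow_le_rpow (setLIntegral_le_lintegral _ _) (by positivity)
      _ ≤ (((2^(r-l):ℕ) : ℝ≥0∞) * Ip l)^(1/p) := ENNReal.rpow_le_rpow (hsum l) (by positivity)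
      _ = ((2^(r-l):ℕ) : ℝ≥0∞)^(1/p) * (Ip l)^(1/p) :=
          ENNReal.mul_rpow_of_nonneg _ _ (by positivity)
      _ = ((2^(r-l):ℕ) : ℝ≥0∞)^(1/p) * eLpNorm (birkSum T f (2^l)) (ENNReal.ofReal p) μ := by
          rw [hNpIp l]
  -- weak norm bound
  have hW : weakNorm μ p (Mmax p T f n) ≤ ∑ l ∈ Finset.range r,
      ENNReal.ofReal (2 / ((2:ℝ)^l) ^ (1/2 - 1/p)) *
        (((2^(r-l):ℕ) : ℝ≥0∞)^(1/p) * eLpNorm (birkSum T f (2^l)) (ENNReal.ofReal p) μ) := by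
    unfold weakNorm
    refine iSup_le fun A => iSup_le fun hA => iSup_le fun hApos => ?_
    have hint1 : ∫⁻ x in A, (‖Mmax p T f n x‖₊ : ℝ≥0∞) ∂μ
        ≤ ∫⁻ x in A, ENNReal.ofReal (Φ x) ∂μ := by
      refine lintegral_mono fun x => ?_
      rw [← enorm_eq_nnnorm, ← ofReal_norm, Real.norm_eq_abs, abs_of_nonneg (hM0 x)]
      exact ENNReal.ofReal_le_ofReal (hMle x)
    have hint2 : ∫⁻ x in A, ENNReal.ofReal (Φ x) ∂μ = ∑ l ∈ Finset.range r,
        ENNReal.ofReal (2 / ((2:ℝ)^l) ^ (1/2 - 1/p)) *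
          ∫⁻ x in A, ENNReal.ofReal (Stmt6Aux.Gmax (fun k => birkSum T f k x) r l) ∂μ := by
      calc ∫⁻ x in A, ENNReal.ofReal (Φ x) ∂μ
          = ∫⁻ x in A, ∑ l ∈ Finset.range r,
              ENNReal.ofReal (2 / ((2:ℝ)^l) ^ (1/2 - 1/p)) *
                ENNReal.ofReal (Stmt6Aux.Gmax (fun k => birkSum T f k x) r l) ∂μ := by
            refine lintegral_congr fun x => ?_
            rw [hΦdef]
            rw [ENNReal.ofReal_sum_of_nonneg (fun l _ => hΦterm_nonneg x l)]
            refine Finset.sum_congr rfl fun l _ => ?_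
            rw [← ENNReal.ofReal_mul (by positivity)]
            congr 1
            ring
        _ = ∑ l ∈ Finset.range r, ∫⁻ x in A,
              ENNReal.ofReal (2 / ((2:ℝ)^l) ^ (1/2 - 1/p)) *
                ENNReal.ofReal (Stmt6Aux.Gmax (fun k => birkSum T f k x) r l) ∂μ :=
            lintegral_finset_sum' _ (fun l _ =>
              (((haeG l).ennreal_ofReal).restrict).const_mul _)
        _ = ∑ l ∈ Finset.range r,
              ENNReal.ofReal (2 / ((2:ℝ)^l) ^ (1/2 - 1/p)) *
                ∫⁻ x in A, ENNReal.ofReal (Stmt6Aux.Gmax (fun k => birkSum T f k x) r l) ∂μ :=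
            Finset.sum_congr rfl fun l _ =>
              lintegral_const_mul'' _ ((haeG l).ennreal_ofReal).restrict
    calc μ A ^ (1/p - 1) * ∫⁻ x in A, (‖Mmax p T f n x‖₊ : ℝ≥0∞) ∂μ
        ≤ μ A ^ (1/p - 1) * ∫⁻ x in A, ENNReal.ofReal (Φ x) ∂μ := mul_le_mul_right hint1 _
      _ = ∑ l ∈ Finset.range r, ENNReal.ofReal (2 / ((2:ℝ)^l) ^ (1/2 - 1/p)) *
            (μ A ^ (1/p - 1) *
              ∫⁻ x in A, ENNReal.ofReal (Stmt6Aux.Gmax (fun k => birkSum T f k x) r l) ∂μ) := by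
          rw [hint2, Finset.mul_sum]
          exact Finset.sum_congr rfl fun l _ => by ring
      _ ≤ ∑ l ∈ Finset.range r, ENNReal.ofReal (2 / ((2:ℝ)^l) ^ (1/2 - 1/p)) *
            (((2^(r-l):ℕ) : ℝ≥0∞)^(1/p) * eLpNorm (birkSum T f (2^l)) (ENNReal.ofReal p) μ) :=
          Finset.sum_le_sum fun l _ => mul_le_mul_right (key l A hA hApos) _
  -- final coefficient comparison
  refine le_trans hW ?_
  have hgoalsum : ∑ j ∈ Finset.range r, ENNReal.ofReal ((2:ℝ)^(-(j:ℝ)/2)) *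
        eLpNorm (fun x => ∑ i ∈ Finset.range (2^j), (P^[i] f) x) (ENNReal.ofReal p) μ
      = ∑ j ∈ Finset.range r, ENNReal.ofReal ((2:ℝ)^(-(j:ℝ)/2)) *
        eLpNorm (birkSum T f (2^j)) (ENNReal.ofReal p) μ :=
    Finset.sum_congr rfl fun j _ => by rw [hSum j]
  rw [hgoalsum]
  have hKp32 : (2:ℝ)^((3:ℝ)/2) ≤ (2:ℝ)^(1/p - 1/2) + 2^((1:ℝ)/2) * (2+K) := by
    have h32 : (2:ℝ)^((3:ℝ)/2) = 2^((1:ℝ)/2) * 2 := by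
      rw [show (3:ℝ)/2 = 1/2 + 1 by norm_num, Real.rpow_add (by norm_num), Real.rpow_one]
    have hA := Real.rpow_nonneg (by norm_num : (0:ℝ) ≤ 2) (1/p - 1/2)
    have hB := Real.rpow_pos_of_pos (by norm_num : (0:ℝ) < 2) ((1:ℝ)/2)
    nlinarith
  have hKp0 : (0:ℝ) ≤ (2:ℝ)^(1/p - 1/2) + 2^((1:ℝ)/2) * (2+K) :=
    le_trans (Real.rpow_nonneg (by norm_num) _) hKp32
  have hcoeff : ∀ l : ℕ, l < r →
      ENNReal.ofReal (2 / ((2:ℝ)^l) ^ (1/2 - 1/p)) * ((2^(r-l):ℕ) : ℝ≥0∞)^(1/p)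
        ≤ ENNReal.ofReal Cp * (n:ℝ≥0∞)^(1/p) *
          ENNReal.ofReal ((2:ℝ)^(1/p - 1/2) + 2^((1:ℝ)/2) * (2+K)) *
          ENNReal.ofReal ((2:ℝ)^(-(l:ℝ)/2)) := by
    intro l hl
    have hnat : ∀ k : ℕ, ((2^k:ℕ) : ℝ≥0∞)^(1/p) = ENNReal.ofReal (((2:ℝ)^(k:ℕ))^(1/p)) := by
      intro k
      rw [← ENNReal.ofReal_rpow_of_pos (by positivity)]
      congr 1
      rw [← ENNReal.ofReal_natCast]
      congr 1
      push_cast; ring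
    have hnlow : ENNReal.ofReal (((2:ℝ)^((r-1:ℕ):ℕ))^(1/p)) ≤ (n:ℝ≥0∞)^(1/p) := by
      rw [← hnat (r-1)]
      exact ENNReal.rpow_le_rpow (by exact_mod_cast hn1) (by positivity)
    have hrealineq : 2 / ((2:ℝ)^l) ^ (1/2 - 1/p) * (((2:ℝ)^((r-l:ℕ):ℕ))^(1/p))
        ≤ Cp * ((2:ℝ)^(1/p - 1/2) + 2^((1:ℝ)/2) * (2+K)) * (2:ℝ)^(-(l:ℝ)/2) *
          (((2:ℝ)^((r-1:ℕ):ℕ))^(1/p)) := by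
      have hc1 : (((r-l:ℕ):ℕ):ℝ) = (r:ℝ) - l := by
        rw [Nat.cast_sub hl.le]
      have hc2 : (((r-1:ℕ):ℕ):ℝ) = (r:ℝ) - 1 := by
        rw [Nat.cast_sub hr]; norm_num
      rw [show ((2:ℝ)^((r-l:ℕ):ℕ)) = (2:ℝ)^((((r-l:ℕ):ℕ)):ℝ) from (Real.rpow_natCast 2 _).symm,
        show ((2:ℝ)^((r-1:ℕ):ℕ)) = (2:ℝ)^((((r-1:ℕ):ℕ)):ℝ) from (Real.rpow_natCast 2 _).symm,
        show ((2:ℝ)^l) = (2:ℝ)^((l:ℕ):ℝ) from (Real.rpow_natCast 2 l).symm,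
        hc1, hc2, ← Real.rpow_mul (by norm_num), ← Real.rpow_mul (by norm_num),
        ← Real.rpow_mul (by norm_num)]
      have hL : 2 / (2:ℝ)^((l:ℝ)*(1/2 - 1/p)) * (2:ℝ)^(((r:ℝ)-(l:ℝ))*(1/p))
          = (2:ℝ)^(1 - (l:ℝ)*(1/2 - 1/p) + ((r:ℝ)-(l:ℝ))*(1/p)) := by
        rw [Real.rpow_add (by norm_num), Real.rpow_sub (by norm_num), Real.rpow_one]
      have hR : (2:ℝ)^(((r:ℝ)-1)*(1/p)) * ((2:ℝ)^((3:ℝ)/2) * (2:ℝ)^(-(l:ℝ)/2))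
          = (2:ℝ)^((((r:ℝ)-1)*(1/p)) + ((3:ℝ)/2 + -(l:ℝ)/2)) := by
        rw [Real.rpow_add (by norm_num), Real.rpow_add (by norm_num)]
      have hexp : 1 - (l:ℝ)*(1/2 - 1/p) + ((r:ℝ)-(l:ℝ))*(1/p)
          ≤ (((r:ℝ)-1)*(1/p)) + ((3:ℝ)/2 + -(l:ℝ)/2) := by
        have h1p : 1/p ≤ 1/2 := h12.le
        nlinarith
      have hX : (0:ℝ) < (2:ℝ)^(((r:ℝ)-1)*(1/p)) := Real.rpow_pos_of_pos (by norm_num) _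
      have hY : (0:ℝ) < (2:ℝ)^(-(l:ℝ)/2) := Real.rpow_pos_of_pos (by norm_num) _
      have hCK : (2:ℝ)^((3:ℝ)/2) ≤ Cp * ((2:ℝ)^(1/p - 1/2) + 2^((1:ℝ)/2) * (2+K)) := by
        nlinarith
      calc 2 / (2:ℝ)^((l:ℝ)*(1/2 - 1/p)) * (2:ℝ)^(((r:ℝ)-(l:ℝ))*(1/p))
          = (2:ℝ)^(1 - (l:ℝ)*(1/2 - 1/p) + ((r:ℝ)-(l:ℝ))*(1/p)) := hL
        _ ≤ (2:ℝ)^((((r:ℝ)-1)*(1/p)) + ((3:ℝ)/2 + -(l:ℝ)/2)) :=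
            (Real.rpow_le_rpow_left_iff (by norm_num)).mpr hexp
        _ = (2:ℝ)^(((r:ℝ)-1)*(1/p)) * ((2:ℝ)^((3:ℝ)/2) * (2:ℝ)^(-(l:ℝ)/2)) := hR.symm
        _ ≤ Cp * ((2:ℝ)^(1/p - 1/2) + 2^((1:ℝ)/2) * (2+K)) * (2:ℝ)^(-(l:ℝ)/2) *
            (2:ℝ)^(((r:ℝ)-1)*(1/p)) := by
            have hhint := mul_nonneg (sub_nonneg.mpr hCK) (mul_pos hX hY).le
            nlinarith
    calc ENNReal.ofReal (2 / ((2:ℝ)^l) ^ (1/2 - 1/p)) * ((2^(r-l):ℕ) : ℝ≥0∞)^(1/p)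
        = ENNReal.ofReal (2 / ((2:ℝ)^l) ^ (1/2 - 1/p) * (((2:ℝ)^((r-l:ℕ):ℕ))^(1/p))) := by
          rw [hnat (r-l), ← ENNReal.ofReal_mul (by positivity)]
      _ ≤ ENNReal.ofReal (Cp * ((2:ℝ)^(1/p - 1/2) + 2^((1:ℝ)/2) * (2+K)) * (2:ℝ)^(-(l:ℝ)/2) *
            (((2:ℝ)^((r-1:ℕ):ℕ))^(1/p))) := ENNReal.ofReal_le_ofReal hrealineq
      _ = ENNReal.ofReal (Cp * ((2:ℝ)^(1/p - 1/2) + 2^((1:ℝ)/2) * (2+K)) * (2:ℝ)^(-(l:ℝ)/2)) *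
            ENNReal.ofReal (((2:ℝ)^((r-1:ℕ):ℕ))^(1/p)) := by
          rw [← ENNReal.ofReal_mul (mul_nonneg (mul_nonneg
            (by linarith : (0:ℝ) ≤ Cp) hKp0) (Real.rpow_nonneg (by norm_num) _))]
      _ ≤ ENNReal.ofReal (Cp * ((2:ℝ)^(1/p - 1/2) + 2^((1:ℝ)/2) * (2+K)) * (2:ℝ)^(-(l:ℝ)/2)) *
            (n:ℝ≥0∞)^(1/p) := mul_le_mul_right hnlow _
      _ = ENNReal.ofReal Cp * (n:ℝ≥0∞)^(1/p) *
          ENNReal.ofReal ((2:ℝ)^(1/p - 1/2) + 2^((1:ℝ)/2) * (2+K)) *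
          ENNReal.ofReal ((2:ℝ)^(-(l:ℝ)/2)) := by
          rw [ENNReal.ofReal_mul (mul_nonneg (by linarith : (0:ℝ) ≤ Cp) hKp0),
            ENNReal.ofReal_mul (by linarith : (0:ℝ) ≤ Cp)]
          ring
  calc ∑ l ∈ Finset.range r, ENNReal.ofReal (2 / ((2:ℝ)^l) ^ (1/2 - 1/p)) *
        (((2^(r-l):ℕ) : ℝ≥0∞)^(1/p) * eLpNorm (birkSum T f (2^l)) (ENNReal.ofReal p) μ)
      ≤ ∑ l ∈ Finset.range r, (ENNReal.ofReal Cp * (n:ℝ≥0∞)^(1/p) *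
          ENNReal.ofReal ((2:ℝ)^(1/p - 1/2) + 2^((1:ℝ)/2) * (2+K))) *
          (ENNReal.ofReal ((2:ℝ)^(-(l:ℝ)/2)) *
            eLpNorm (birkSum T f (2^l)) (ENNReal.ofReal p) μ) := by
        refine Finset.sum_le_sum fun l hl => ?_
        have h := hcoeff l (Finset.mem_range.mp hl)
        calc ENNReal.ofReal (2 / ((2:ℝ)^l) ^ (1/2 - 1/p)) *
              (((2^(r-l):ℕ) : ℝ≥0∞)^(1/p) * eLpNorm (birkSum T f (2^l)) (ENNReal.ofReal p) μ)
            = (ENNReal.ofReal (2 / ((2:ℝ)^l) ^ (1/2 - 1/p)) * ((2^(r-l):ℕ) : ℝ≥0∞)^(1/p)) *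
              eLpNorm (birkSum T f (2^l)) (ENNReal.ofReal p) μ := by ring
          _ ≤ (ENNReal.ofReal Cp * (n:ℝ≥0∞)^(1/p) *
              ENNReal.ofReal ((2:ℝ)^(1/p - 1/2) + 2^((1:ℝ)/2) * (2+K)) *
              ENNReal.ofReal ((2:ℝ)^(-(l:ℝ)/2))) *
              eLpNorm (birkSum T f (2^l)) (ENNReal.ofReal p) μ := mul_le_mul_left h _
          _ = (ENNReal.ofReal Cp * (n:ℝ≥0∞)^(1/p) *
              ENNReal.ofReal ((2:ℝ)^(1/p - 1/2) + 2^((1:ℝ)/2) * (2+K))) *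
              (ENNReal.ofReal ((2:ℝ)^(-(l:ℝ)/2)) *
                eLpNorm (birkSum T f (2^l)) (ENNReal.ofReal p) μ) := by ring
    _ = ENNReal.ofReal Cp * (n:ℝ≥0∞)^(1/p) *
        (ENNReal.ofReal ((2:ℝ)^(1/p - 1/2) + 2^((1:ℝ)/2) * (2+K)) *
          ∑ l ∈ Finset.range r, ENNReal.ofReal ((2:ℝ)^(-(l:ℝ)/2)) *
            eLpNorm (birkSum T f (2^l)) (ENNReal.ofReal p) μ) := by
        rw [← Finset.mul_sum]
        ring
    _ ≤ ENNReal.ofReal Cp * (n:ℝ≥0∞)^(1/p) *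
        (eLpNorm (fun x => f x - (P f) (Tinv x)) (ENNReal.ofReal p) μ +
          ENNReal.ofReal ((2:ℝ)^(1/p - 1/2) + 2^((1:ℝ)/2) * (2+K)) *
          ∑ l ∈ Finset.range r, ENNReal.ofReal ((2:ℝ)^(-(l:ℝ)/2)) *
            eLpNorm (birkSum T f (2^l)) (ENNReal.ofReal p) μ) := mul_le_mul_right le_add_self _
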